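/- arXiv:2306.15862 — 2 statements merged into one kernel-verified Lean document; each statement's English description precedes it below -/
import Mathlib

section
/- For every real number r ≥ 1 and every integer ν ≥ 1 there exists a constant C_{r,ν} > 0 such that for all a_1,…,a_ν ∈ ℝ: |(∑_{i=1}^ν a_i)|∑_{i=1}^ν a_i|^{r-1} - ∑_{i=1}^ν a_i|a_i|^{r-1}| ≤ C_{r,ν} ∑_{1≤i≠j≤ν} |a_i|^{r-1}|a_j|. -/
open Finset


lemma mul_rpow_self (r : ℝ) (hr : 1 ≤ r) {x : ℝ} (hx : 0 ≤ x) :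
    x * x ^ (r - 1) = x ^ r := by
  have h := Real.rpow_add' hx (show r - 1 + 1 ≠ 0 by simp; linarith)
  rw [Real.rpow_one] at h
  rw [show r - 1 + 1 = r from by ring] at h
  rw [h]; ring

-- Bernoulli-based: for 0 ≤ a ≤ b, b^r - a^r ≤ r * b^(r-1) * (b - a)
lemma rpow_sub_rpow_le (r : ℝ) (hr : 1 ≤ r) {a b : ℝ} (ha : 0 ≤ a) (hab : a ≤ b) :
    b ^ r - a ^ r ≤ r * b ^ (r - 1) * (b - a) := by
  rcases eq_or_lt_of_le (ha.trans hab) with h | hb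
  · have hb0 : b = 0 := h.symm
    have ha0 : a = 0 := le_antisymm (hb0 ▸ hab) ha
    subst hb0; subst ha0; simp
  · have hs : -1 ≤ a / b - 1 := by
      have : 0 ≤ a / b := div_nonneg ha hb.le
      linarith
    have hB := one_add_mul_self_le_rpow_one_add hs hr
    have h1 : (1 : ℝ) + (a / b - 1) = a / b := by ring
    rw [h1] at hB
    have hdiv : (a / b) ^ r = a ^ r / b ^ r := Real.div_rpow ha hb.le r
    rw [hdiv] at hB
    have hbr : (0 : ℝ) < b ^ r := Real.rpow_pos_of_pos hb r
    have hB2 : (1 + r * (a / b - 1)) * b ^ r ≤ a ^ r := by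
      calc (1 + r * (a / b - 1)) * b ^ r ≤ (a ^ r / b ^ r) * b ^ r :=
            mul_le_mul_of_nonneg_right hB hbr.le
        _ = a ^ r := by field_simp
    have hbr1 : b ^ r = b ^ (r - 1) * b := by
      rw [← mul_rpow_self r hr hb.le]; ring
    have h3 : (a / b - 1) * b ^ r = (a - b) * b ^ (r - 1) := by
      rw [hbr1]; field_simp
    have hB3 : b ^ r + r * ((a - b) * b ^ (r - 1)) ≤ a ^ r := by
      calc b ^ r + r * ((a - b) * b ^ (r - 1)) = (1 + r * (a / b - 1)) * b ^ r := by
            rw [← h3]; ring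
        _ ≤ a ^ r := hB2
    linarith

noncomputable def phi (r x : ℝ) : ℝ := x * |x| ^ (r - 1)

lemma phi_neg (r x : ℝ) : phi r (-x) = - phi r x := by
  simp [phi, abs_neg, neg_mul]

lemma phi_of_nonneg (r : ℝ) (hr : 1 ≤ r) {x : ℝ} (hx : 0 ≤ x) : phi r x = x ^ r := by
  rw [phi, abs_of_nonneg hx, mul_rpow_self r hr hx]


lemma phi_lip_nonneg (r : ℝ) (hr : 1 ≤ r) {x y : ℝ} (hx : 0 ≤ x) (hy : 0 ≤ y) :
    |phi r y - phi r x| ≤ r * (max x y) ^ (r - 1) * |y - x| := by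
  wlog hxy : x ≤ y generalizing x y
  · have h := this hy hx (le_of_not_ge hxy)
    rwa [abs_sub_comm (phi r x), max_comm y x, abs_sub_comm x y] at h
  rw [phi_of_nonneg r hr hx, phi_of_nonneg r hr hy,
      max_eq_right hxy, abs_of_nonneg (by linarith : (0:ℝ) ≤ y - x),
      abs_of_nonneg (sub_nonneg.mpr (Real.rpow_le_rpow hx hxy (by linarith)))]
  exact rpow_sub_rpow_le r hr hx hxy

lemma phi_lip_mixed (r : ℝ) (hr : 1 ≤ r) {x y : ℝ} (hx : x ≤ 0) (hy : 0 ≤ y) :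
    |phi r y - phi r x| ≤ r * (max |x| |y|) ^ (r - 1) * |y - x| := by
  set M := max |x| |y| with hM
  have hMx : |x| ≤ M := le_max_left _ _
  have hMy : |y| ≤ M := le_max_right _ _
  have hM0 : 0 ≤ M := le_trans (abs_nonneg x) hMx
  have hpx : phi r x = -((-x) ^ r) := by
    have h := phi_neg r (-x)
    rw [neg_neg] at h
    rw [h, phi_of_nonneg r hr (neg_nonneg.mpr hx)]
  have hpy : phi r y = y ^ r := phi_of_nonneg r hr hy
  have hMr : 0 ≤ M ^ (r - 1) := Real.rpow_nonneg hM0 _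
  have h1 : y ^ r ≤ y * M ^ (r - 1) := by
    rw [← mul_rpow_self r hr hy]
    exact mul_le_mul_of_nonneg_left
      (Real.rpow_le_rpow hy (le_trans (le_of_eq (abs_of_nonneg hy).symm) hMy) (by linarith)) hy
  have h2 : (-x) ^ r ≤ (-x) * M ^ (r - 1) := by
    rw [← mul_rpow_self r hr (neg_nonneg.mpr hx)]
    exact mul_le_mul_of_nonneg_left
      (Real.rpow_le_rpow (neg_nonneg.mpr hx)
        (le_trans (le_of_eq (abs_of_nonpos hx).symm) hMx) (by linarith)) (neg_nonneg.mpr hx)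
  have hnn : 0 ≤ y ^ r + (-x) ^ r :=
    add_nonneg (Real.rpow_nonneg hy _) (Real.rpow_nonneg (neg_nonneg.mpr hx) _)
  have habs : |phi r y - phi r x| = y ^ r + (-x) ^ r := by
    rw [hpx, hpy, sub_neg_eq_add, abs_of_nonneg hnn]
  rw [habs, abs_of_nonneg (by linarith : (0:ℝ) ≤ y - x)]
  nlinarith [mul_nonneg hMr (by linarith : (0:ℝ) ≤ y - x)]

lemma phi_lip (r : ℝ) (hr : 1 ≤ r) (x y : ℝ) :
    |phi r y - phi r x| ≤ r * (max |x| |y|) ^ (r - 1) * |y - x| := by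
  rcases le_total 0 x with hx | hx <;> rcases le_total 0 y with hy | hy
  · rw [abs_of_nonneg hx, abs_of_nonneg hy]; exact phi_lip_nonneg r hr hx hy
  · have h := phi_lip_mixed r hr hy hx
    rwa [abs_sub_comm (phi r x), max_comm |y| |x|, abs_sub_comm x y] at h
  · exact phi_lip_mixed r hr hx hy
  · have h := phi_lip_nonneg r hr (neg_nonneg.mpr hx) (neg_nonneg.mpr hy)
    rw [phi_neg, phi_neg] at h
    have e1 : |-phi r y - -phi r x| = |phi r y - phi r x| := by
      rw [show -phi r y - -phi r x = -(phi r y - phi r x) by ring, abs_neg]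
    have e2 : |(-y) - (-x)| = |y - x| := by
      rw [show -y - -x = -(y - x) by ring, abs_neg]
    rw [e1, e2] at h
    rwa [abs_of_nonpos hx, abs_of_nonpos hy]

lemma phi_add_bound (r : ℝ) (hr : 1 ≤ r) (x y : ℝ) :
    |phi r (x + y) - phi r x - phi r y|
      ≤ (r * 2 ^ (r - 1) + 1) * (|x| ^ (r - 1) * |y| + |y| ^ (r - 1) * |x|) := by
  wlog hxy : |x| ≤ |y| generalizing x y
  · have h := this y x (le_of_not_ge hxy)
    rw [add_comm y x] at h
    calc |phi r (x + y) - phi r x - phi r y|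
        = |phi r (x + y) - phi r y - phi r x| := by ring_nf
      _ ≤ (r * 2 ^ (r - 1) + 1) * (|y| ^ (r - 1) * |x| + |x| ^ (r - 1) * |y|) := h
      _ = (r * 2 ^ (r - 1) + 1) * (|x| ^ (r - 1) * |y| + |y| ^ (r - 1) * |x|) := by ring
  have hK : (0:ℝ) ≤ r * 2 ^ (r - 1) + 1 := by
    have := Real.rpow_nonneg (show (0:ℝ) ≤ 2 by norm_num) (r - 1)
    nlinarith
  have hlip := phi_lip r hr y (x + y)
  rw [add_sub_cancel_right] at hlip
  have hmax : max |y| |x + y| ≤ 2 * |y| := by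
    have := abs_add_le x y
    have := abs_nonneg y
    simp only [max_le_iff]
    constructor <;> linarith
  have hmax0 : 0 ≤ max |y| |x + y| := le_trans (abs_nonneg y) (le_max_left _ _)
  have hmr : (max |y| |x + y|) ^ (r - 1) ≤ 2 ^ (r - 1) * |y| ^ (r - 1) := by
    calc (max |y| |x + y|) ^ (r - 1) ≤ (2 * |y|) ^ (r - 1) :=
          Real.rpow_le_rpow hmax0 hmax (by linarith)
      _ = 2 ^ (r - 1) * |y| ^ (r - 1) := Real.mul_rpow (by norm_num) (abs_nonneg y)
  have hphix : |phi r x| ≤ |y| ^ (r - 1) * |x| := by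
    rw [phi, abs_mul, abs_of_nonneg (Real.rpow_nonneg (abs_nonneg x) _)]
    rw [mul_comm]
    exact mul_le_mul_of_nonneg_right
      (Real.rpow_le_rpow (abs_nonneg x) hxy (by linarith)) (abs_nonneg x)
  have h1 : |phi r (x + y) - phi r x - phi r y| ≤ |phi r (x + y) - phi r y| + |phi r x| := by
    calc |phi r (x + y) - phi r x - phi r y| = |(phi r (x + y) - phi r y) + (- phi r x)| := by
          ring_nf
      _ ≤ |phi r (x + y) - phi r y| + |-phi r x| := abs_add_le _ _
      _ = |phi r (x + y) - phi r y| + |phi r x| := by rw [abs_neg]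
  have h2 : |phi r (x + y) - phi r y| ≤ r * (2 ^ (r - 1) * |y| ^ (r - 1)) * |x| := by
    calc |phi r (x + y) - phi r y| ≤ r * (max |y| |x + y|) ^ (r - 1) * |x| := hlip
      _ ≤ r * (2 ^ (r - 1) * |y| ^ (r - 1)) * |x| := by
          apply mul_le_mul_of_nonneg_right _ (abs_nonneg x)
          exact mul_le_mul_of_nonneg_left hmr (by linarith)
  have hnn1 : 0 ≤ |x| ^ (r - 1) * |y| := mul_nonneg (Real.rpow_nonneg (abs_nonneg x) _) (abs_nonneg y)
  have hnn2 : 0 ≤ |y| ^ (r - 1) * |x| := mul_nonneg (Real.rpow_nonneg (abs_nonneg y) _) (abs_nonneg x)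
  nlinarith [h1, h2, hphix]


lemma sum_rpow_le_card_rpow_mul (p : ℝ) (hp : 0 ≤ p) {n : ℕ} (hn : 1 ≤ n)
    (x : Fin n → ℝ) (hx : ∀ i, 0 ≤ x i) :
    (∑ i, x i) ^ p ≤ (n : ℝ) ^ p * ∑ i, (x i) ^ p := by
  have hne : (univ : Finset (Fin n)).Nonempty := by
    have : Nonempty (Fin n) := ⟨⟨0, hn⟩⟩
    exact univ_nonempty
  obtain ⟨j, _, hj⟩ := Finset.exists_mem_eq_sup' hne x
  set M := univ.sup' hne x with hMdef
  have hM0 : 0 ≤ M := hj ▸ hx j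
  have hsum : ∑ i, x i ≤ (n : ℝ) * M := by
    calc ∑ i, x i ≤ ∑ _i : Fin n, M := sum_le_sum (fun i _ => Finset.le_sup' x (mem_univ i))
      _ = (n : ℝ) * M := by simp [mul_comm]
  have h1 : (∑ i, x i) ^ p ≤ ((n : ℝ) * M) ^ p :=
    Real.rpow_le_rpow (sum_nonneg fun i _ => hx i) hsum hp
  rw [Real.mul_rpow (by positivity) hM0] at h1
  have h2 : M ^ p ≤ ∑ i, (x i) ^ p := by
    rw [hj]
    exact Finset.single_le_sum (fun i _ => Real.rpow_nonneg (hx i) p) (mem_univ j)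
  calc (∑ i, x i) ^ p ≤ (n : ℝ) ^ p * M ^ p := h1
    _ ≤ (n : ℝ) ^ p * ∑ i, (x i) ^ p :=
        mul_le_mul_of_nonneg_left h2 (Real.rpow_nonneg (by positivity) p)

lemma T_eq (r : ℝ) {n : ℕ} (a : Fin n → ℝ) :
    ∑ i, ∑ j ∈ univ.erase i, |a i| ^ (r - 1) * |a j|
      = (∑ i, |a i| ^ (r - 1)) * (∑ j, |a j|) - ∑ i, |a i| ^ (r - 1) * |a i| := by
  have h : ∀ i : Fin n, ∑ j ∈ univ.erase i, |a i| ^ (r - 1) * |a j|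
      = |a i| ^ (r - 1) * (∑ j, |a j|) - |a i| ^ (r - 1) * |a i| := by
    intro i
    rw [← Finset.mul_sum, Finset.sum_erase_eq_sub (mem_univ i), mul_sub]
  rw [Finset.sum_congr rfl (fun i _ => h i), Finset.sum_sub_distrib, ← Finset.sum_mul]

lemma key (r : ℝ) (hr : 1 ≤ r) (ν : ℕ) :
    ∃ C : ℝ, 0 < C ∧ ∀ a : Fin ν → ℝ,
      |phi r (∑ i, a i) - ∑ i, phi r (a i)|
        ≤ C * ∑ i, ∑ j ∈ univ.erase i, |a i| ^ (r - 1) * |a j| := by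
  induction ν with
  | zero => exact ⟨1, one_pos, fun a => by simp [phi]⟩
  | succ n ih =>
    obtain ⟨C, hC, hCa⟩ := ih
    rcases Nat.eq_zero_or_pos n with hn | hn
    · subst hn
      refine ⟨1, one_pos, fun a => ?_⟩
      have he : (univ : Finset (Fin 1)).erase 0 = ∅ := by decide
      simp [Fin.sum_univ_one, he]
    · set K := r * 2 ^ (r - 1) + 1 with hKdef
      have h2r : (0:ℝ) < 2 ^ (r - 1) := Real.rpow_pos_of_pos (by norm_num) _
      have hK : 0 < K := by nlinarith
      have hnr : (0:ℝ) ≤ (n : ℝ) ^ (r - 1) := Real.rpow_nonneg (by positivity) _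
      refine ⟨C + K * (n : ℝ) ^ (r - 1) + K, by nlinarith, fun a => ?_⟩
      set b : Fin n → ℝ := fun i => a i.castSucc with hbdef
      set z := a (Fin.last n) with hzdef
      set S := ∑ i, b i with hSdef
      set P := ∑ i, |b i| ^ (r - 1) with hPdef
      set Q := ∑ i, |b i| with hQdef
      set Tb := ∑ i, ∑ j ∈ univ.erase i, |b i| ^ (r - 1) * |b j| with hTbdef
      have hsplit : ∑ i, a i = S + z := Fin.sum_univ_castSucc a
      have hsplitphi : ∑ i, phi r (a i) = (∑ i, phi r (b i)) + phi r z :=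
        Fin.sum_univ_castSucc (fun i => phi r (a i))
      have hTa : ∑ i, ∑ j ∈ univ.erase i, |a i| ^ (r - 1) * |a j|
          = Tb + P * |z| + |z| ^ (r - 1) * Q := by
        rw [T_eq r a, hTbdef, T_eq r b]
        rw [Fin.sum_univ_castSucc (fun i => |a i| ^ (r - 1)),
            Fin.sum_univ_castSucc (fun i => |a i|),
            Fin.sum_univ_castSucc (fun i => |a i| ^ (r - 1) * |a i|)]
        simp only [← hbdef, ← hzdef, ← hPdef, ← hQdef]
        ring
      have hzr : 0 ≤ |z| ^ (r - 1) := Real.rpow_nonneg (abs_nonneg z) _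
      have hz0 : 0 ≤ |z| := abs_nonneg z
      have hP0 : 0 ≤ P := sum_nonneg fun i _ => Real.rpow_nonneg (abs_nonneg _) _
      have hQ0 : 0 ≤ Q := sum_nonneg fun i _ => abs_nonneg _
      have hTb0 : 0 ≤ Tb := sum_nonneg fun i _ => sum_nonneg fun j _ =>
        mul_nonneg (Real.rpow_nonneg (abs_nonneg _) _) (abs_nonneg _)
      have hQS : |S| ≤ Q := Finset.abs_sum_le_sum_abs _ _
      have hPS : |S| ^ (r - 1) ≤ (n : ℝ) ^ (r - 1) * P := by
        calc |S| ^ (r - 1) ≤ Q ^ (r - 1) :=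
              Real.rpow_le_rpow (abs_nonneg S) hQS (by linarith)
          _ ≤ (n : ℝ) ^ (r - 1) * P :=
              sum_rpow_le_card_rpow_mul (r - 1) (by linarith) hn
                (fun i => |b i|) (fun i => abs_nonneg _)
      have htri : |phi r (∑ i, a i) - ∑ i, phi r (a i)|
          ≤ |phi r (S + z) - phi r S - phi r z| + |phi r S - ∑ i, phi r (b i)| := by
        rw [hsplit, hsplitphi]
        calc |phi r (S + z) - ((∑ i, phi r (b i)) + phi r z)|
            = |(phi r (S + z) - phi r S - phi r z) + (phi r S - ∑ i, phi r (b i))| := by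
              ring_nf
          _ ≤ _ := abs_add_le _ _
      have h1 := phi_add_bound r hr S z
      have h2 : |phi r S - ∑ i, phi r (b i)| ≤ C * Tb := by
        rw [hSdef, hTbdef]; exact hCa b
      have s1 : |S| ^ (r - 1) * |z| ≤ ((n : ℝ) ^ (r - 1) * P) * |z| :=
        mul_le_mul_of_nonneg_right hPS hz0
      have s2 : |z| ^ (r - 1) * |S| ≤ |z| ^ (r - 1) * Q :=
        mul_le_mul_of_nonneg_left hQS hzr
      have h3 : K * (|S| ^ (r - 1) * |z| + |z| ^ (r - 1) * |S|)
          ≤ K * (((n : ℝ) ^ (r - 1) * P) * |z| + |z| ^ (r - 1) * Q) :=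
        mul_le_mul_of_nonneg_left (add_le_add s1 s2) hK.le
      rw [hTa]
      calc |phi r (∑ i, a i) - ∑ i, phi r (a i)|
          ≤ |phi r (S + z) - phi r S - phi r z| + |phi r S - ∑ i, phi r (b i)| := htri
        _ ≤ K * (|S| ^ (r - 1) * |z| + |z| ^ (r - 1) * |S|) + C * Tb :=
            add_le_add (hKdef ▸ h1) h2
        _ ≤ K * (((n : ℝ) ^ (r - 1) * P) * |z| + |z| ^ (r - 1) * Q) + C * Tb := by
            linarith [h3]
        _ ≤ (C + K * (n : ℝ) ^ (r - 1) + K) * (Tb + P * |z| + |z| ^ (r - 1) * Q) := by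
            nlinarith [mul_nonneg hC.le (mul_nonneg hP0 hz0),
              mul_nonneg hC.le (mul_nonneg hzr hQ0),
              mul_nonneg hK.le hTb0,
              mul_nonneg (mul_nonneg hK.le hnr) hTb0,
              mul_nonneg (mul_nonneg hK.le hnr) (mul_nonneg hzr hQ0),
              mul_nonneg hK.le (mul_nonneg hP0 hz0)]

/-- For every real `r ≥ 1` and integer `ν ≥ 1` there is a constant `C_{r,ν} > 0` such that
for all `a_1, …, a_ν ∈ ℝ`,
`|(∑ a_i)|∑ a_i|^{r-1} - ∑ a_i|a_i|^{r-1}| ≤ C_{r,ν} ∑_{i ≠ j} |a_i|^{r-1}|a_j|`. -/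
theorem stmt_1 (r : ℝ) (hr : 1 ≤ r) (ν : ℕ) (hν : 1 ≤ ν) :
    ∃ C : ℝ, 0 < C ∧ ∀ a : Fin ν → ℝ,
      |(∑ i, a i) * |∑ i, a i| ^ (r - 1) - ∑ i, a i * |a i| ^ (r - 1)|
        ≤ C * ∑ i, ∑ j ∈ Finset.univ.erase i, |a i| ^ (r - 1) * |a j| := by
  obtain ⟨C, hC, hCa⟩ := key r hr ν
  exact ⟨C, hC, fun a => by simpa [phi] using hCa a⟩
end

section
/- Let N ≥ 3, p = (N+2)/(N-2). Let U = U[z_1,λ_1] and V = U[z_2,λ_2] be two Aubin–Talenti bubbles with λ_1 ≥ λ_2, and set Q = min(λ_2/λ_1, 1/(λ_1 λ_2 |z_1 - z_2|^2)). Then ∫_{ℝ^N} U^p V dx is comparable, with constants depending only on N, to Q^{(N-2)/2}. -/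
set_option maxHeartbeats 1000000


open MeasureTheory Classical

/-- The Aubin–Talenti bubble `U[z,λ]` on `ℝ^N`. -/
noncomputable def bubble14 (N : ℕ) (z : EuclideanSpace ℝ (Fin N)) (lam : ℝ)
    (x : EuclideanSpace ℝ (Fin N)) : ℝ :=
  ((N : ℝ) * ((N : ℝ) - 2)) ^ (((N : ℝ) - 2) / 4) * lam ^ (((N : ℝ) - 2) / 2)
    * (1 + lam ^ 2 * ‖x - z‖ ^ 2) ^ (-(((N : ℝ) - 2) / 2))

/-- The interaction quantity `Q = min(λ₂/λ₁, 1/(λ₁λ₂|z₁-z₂|²))` (when `z₁ = z₂`, the second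
quantity is `+∞` and `Q = λ₂/λ₁`). -/

noncomputable def interQ14 (N : ℕ) (z₁ z₂ : EuclideanSpace ℝ (Fin N)) (l₁ l₂ : ℝ) : ℝ :=
  if z₁ = z₂ then l₂ / l₁ else min (l₂ / l₁) (1 / (l₁ * l₂ * ‖z₁ - z₂‖ ^ 2))

noncomputable section
namespace S14

variable {N : ℕ}

abbrev E (N : ℕ) := EuclideanSpace ℝ (Fin N)

def base (N : ℕ) (y : E N) : ℝ := (1 + ‖y‖ ^ 2) ^ (-(((N : ℝ) + 2) / 2))

lemma base_pos (y : E N) : 0 < base N y := by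
  have : (0:ℝ) < 1 + ‖y‖ ^ 2 := by positivity
  exact Real.rpow_pos_of_pos this _

lemma base_le_one (y : E N) : base N y ≤ 1 := by
  apply Real.rpow_le_one_of_one_le_of_nonpos
  · nlinarith [sq_nonneg ‖y‖]
  · have : (0:ℝ) ≤ ((N:ℝ)+2)/2 := by positivity
    linarith

lemma base_cont : Continuous (base N) := by
  apply Continuous.rpow_const (by continuity)
  intro y; left; positivity

lemma base_integrable (hN : 3 ≤ N) : Integrable (base N) := by
  have h := integrable_rpow_neg_one_add_norm_sq
    (E := E N) (μ := volume) (r := (N : ℝ) + 2) ?_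
  · have he : (-(((N : ℝ) + 2) / 2)) = -((N:ℝ)+2)/2 := (neg_div _ _).symm
    exact h.congr (Filter.Eventually.of_forall fun y => by rw [base, he])
  · rw [finrank_euclideanSpace_fin]; linarith

def Iconst (N : ℕ) : ℝ := ∫ y : E N, base N y

lemma Iconst_pos (hN : 3 ≤ N) : 0 < Iconst N := by
  haveI : Nonempty (Fin N) := ⟨⟨0, by omega⟩⟩
  haveI : Nontrivial (E N) := by infer_instance
  haveI : NoncompactSpace (E N) := by infer_instance
  rw [Iconst, integral_pos_iff_support_of_nonneg (fun y => (base_pos y).le)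
    (base_integrable hN)]
  have hs : Function.support (base N) = Set.univ := by
    ext y; simp [Function.mem_support, (base_pos y).ne']
  rw [hs, measure_univ_of_isAddLeftInvariant]
  exact ENNReal.zero_lt_top

lemma integral_base_shift (hN : 3 ≤ N) {μ : ℝ} (hμ : 0 < μ) (w : E N) :
    ∫ y : E N, (1 + μ ^ 2 * ‖y - w‖ ^ 2) ^ (-(((N : ℝ) + 2) / 2))
      = (μ ^ N)⁻¹ * Iconst N := by
  have key : ∀ y : E N, (1 + μ ^ 2 * ‖y - w‖ ^ 2) ^ (-(((N : ℝ) + 2) / 2))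
      = base N (μ • (y - w)) := by
    intro y
    rw [base, norm_smul]
    simp [mul_pow, abs_of_pos hμ]
  simp_rw [key]
  have h1 : ∫ y : E N, base N (μ • (y - w)) = ∫ y : E N, base N (μ • y) := by
    have := integral_add_right_eq_self (μ := (volume : Measure (E N)))
      (fun y => base N (μ • y)) (-w)
    simpa [sub_eq_add_neg] using this
  rw [h1, Measure.integral_comp_smul_of_nonneg (volume : Measure (E N)) (base N) μ (hR := hμ.le)]
  rw [finrank_euclideanSpace_fin]
  simp [Iconst, smul_eq_mul]

lemma integrable_base_shift (hN : 3 ≤ N) {μ : ℝ} (hμ : 0 < μ) (w : E N) :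
    Integrable (fun y : E N => (1 + μ ^ 2 * ‖y - w‖ ^ 2) ^ (-(((N : ℝ) + 2) / 2))) := by
  have key : ∀ y : E N, (1 + μ ^ 2 * ‖y - w‖ ^ 2) ^ (-(((N : ℝ) + 2) / 2))
      = base N (μ • (y - w)) := by
    intro y
    rw [base, norm_smul]
    simp [mul_pow, abs_of_pos hμ]
  have h2 : Integrable (fun y : E N => base N (μ • y)) :=
    (integrable_comp_smul_iff (volume : Measure (E N)) (base N) hμ.ne').2 (base_integrable hN)
  have h3 : Integrable (fun y : E N => base N (μ • (y + -w))) := by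
    exact h2.comp_add_right (-w)
  refine h3.congr (Filter.Eventually.of_forall fun y => ?_)
  show base N (μ • (y + -w)) = _
  rw [← sub_eq_add_neg, ← key y]

/-- core integrand -/
def corefn (N : ℕ) (μ : ℝ) (w : E N) (y : E N) : ℝ :=
  base N y * (μ ^ (((N:ℝ)-2)/2) * (1 + μ ^ 2 * ‖y - w‖ ^ 2) ^ (-(((N:ℝ)-2)/2)))

/-- The normalized interaction quantity -/
def mQ (μ : ℝ) (w : E N) : ℝ := μ / max 1 (μ ^ 2 * ‖w‖ ^ 2)

lemma mQ_pos {μ : ℝ} (hμ : 0 < μ) (w : E N) : 0 < mQ μ w :=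
  div_pos hμ (lt_of_lt_of_le one_pos (le_max_left _ _))

lemma corefn_nonneg (μ : ℝ) (w y : E N) (hμ : 0 ≤ μ) : 0 ≤ corefn N μ w y := by
  have h1 : (0:ℝ) < 1 + μ ^ 2 * ‖y - w‖ ^ 2 := by positivity
  have h2 := (base_pos (N := N) y).le
  have h3 := Real.rpow_nonneg hμ (((N:ℝ)-2)/2)
  have h4 := (Real.rpow_pos_of_pos h1 (-(((N:ℝ)-2)/2))).le
  exact mul_nonneg h2 (mul_nonneg h3 h4)

lemma corefn_le_base (hN : 3 ≤ N) {μ : ℝ} (hμ : 0 < μ) (hμ1 : μ ≤ 1) (w y : E N) :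
    corefn N μ w y ≤ base N y := by
  have ha : (0:ℝ) ≤ ((N:ℝ)-2)/2 := by
    have : (3:ℝ) ≤ (N:ℝ) := by exact_mod_cast hN
    linarith
  have h1 : μ ^ (((N:ℝ)-2)/2) ≤ 1 := Real.rpow_le_one hμ.le hμ1 ha
  have h2 : (1 + μ ^ 2 * ‖y - w‖ ^ 2) ^ (-(((N:ℝ)-2)/2)) ≤ 1 := by
    apply Real.rpow_le_one_of_one_le_of_nonpos
    · nlinarith [sq_nonneg (μ * ‖y - w‖), sq_nonneg ‖y-w‖, sq_nonneg μ,
        mul_nonneg (sq_nonneg μ) (sq_nonneg ‖y-w‖)]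
    · linarith
  have h3 : (0:ℝ) < 1 + μ ^ 2 * ‖y - w‖ ^ 2 := by positivity
  have h4 : (0:ℝ) ≤ (1 + μ ^ 2 * ‖y - w‖ ^ 2) ^ (-(((N:ℝ)-2)/2)) :=
    (Real.rpow_pos_of_pos h3 _).le
  have h5 : μ ^ (((N:ℝ)-2)/2) * (1 + μ ^ 2 * ‖y - w‖ ^ 2) ^ (-(((N:ℝ)-2)/2)) ≤ 1 := by
    calc μ ^ (((N:ℝ)-2)/2) * (1 + μ ^ 2 * ‖y - w‖ ^ 2) ^ (-(((N:ℝ)-2)/2))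
        ≤ 1 * 1 := mul_le_mul h1 h2 h4 zero_le_one
      _ = 1 := by ring
  calc corefn N μ w y ≤ base N y * 1 := by
        apply mul_le_mul_of_nonneg_left h5 (base_pos y).le
    _ = base N y := by ring

lemma corefn_cont {μ : ℝ} (hμ : 0 < μ) (w : E N) : Continuous (corefn N μ w) := by
  apply base_cont.mul
  apply continuous_const.mul
  apply Continuous.rpow_const (by continuity)
  intro y; left; positivity

lemma corefn_integrable (hN : 3 ≤ N) {μ : ℝ} (hμ : 0 < μ) (hμ1 : μ ≤ 1) (w : E N) :
    Integrable (corefn N μ w) := by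
  refine (base_integrable hN).mono' ((corefn_cont hμ w).aestronglyMeasurable) ?_
  refine Filter.Eventually.of_forall fun y => ?_
  rw [Real.norm_of_nonneg (corefn_nonneg μ w y hμ.le)]
  exact corefn_le_base hN hμ hμ1 w y


lemma core_lower (hN : 3 ≤ N) {μ : ℝ} (hμ : 0 < μ) (hμ1 : μ ≤ 1) (w : E N) :
    (2:ℝ) ^ (-(((N:ℝ)+2)/2)) * (5:ℝ) ^ (-(((N:ℝ)-2)/2))
      * (volume (Metric.ball (0 : E N) 1)).toReal * mQ μ w ^ (((N:ℝ)-2)/2)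
      ≤ ∫ y : E N, corefn N μ w y := by
  have ha : (0:ℝ) ≤ ((N:ℝ)-2)/2 := by
    have : (3:ℝ) ≤ (N:ℝ) := by exact_mod_cast hN
    linarith
  set a : ℝ := ((N:ℝ)-2)/2 with hadef
  set b : ℝ := ((N:ℝ)+2)/2 with hbdef
  set M : ℝ := max 1 (μ ^ 2 * ‖w‖ ^ 2) with hMdef
  have hM1 : (1:ℝ) ≤ M := le_max_left _ _
  have hM0 : (0:ℝ) < M := lt_of_lt_of_le one_pos hM1
  have hMw : μ ^ 2 * ‖w‖ ^ 2 ≤ M := le_max_right _ _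
  -- pointwise bound on the unit ball
  have key : ∀ y ∈ Metric.ball (0 : E N) 1,
      (2:ℝ) ^ (-b) * ((5:ℝ) ^ (-a) * mQ μ w ^ a) ≤ corefn N μ w y := by
    intro y hy
    rw [mem_ball_zero_iff] at hy
    have hbase : (2:ℝ) ^ (-b) ≤ base N y := by
      rw [base]
      exact Real.rpow_le_rpow_of_nonpos (by positivity)
        (by nlinarith [norm_nonneg y]) (neg_nonpos.mpr (by positivity))
    have hT : (1:ℝ) + μ ^ 2 * ‖y - w‖ ^ 2 ≤ 5 * M := by
      have h1 : ‖y - w‖ ≤ 1 + ‖w‖ := by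
        calc ‖y - w‖ ≤ ‖y‖ + ‖w‖ := norm_sub_le y w
          _ ≤ 1 + ‖w‖ := by linarith
      have h2 : μ ^ 2 * ‖y - w‖ ^ 2 ≤ μ ^ 2 * (1 + ‖w‖) ^ 2 := by
        apply mul_le_mul_of_nonneg_left _ (sq_nonneg μ)
        exact pow_le_pow_left₀ (norm_nonneg _) h1 2
      have hμ2 : μ ^ 2 ≤ 1 := by nlinarith
      nlinarith [sq_nonneg (1 - ‖w‖), norm_nonneg w, sq_nonneg ‖w‖,
        mul_nonneg (sq_nonneg μ) (sq_nonneg ‖w‖)]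
    have hTpos : (0:ℝ) < 1 + μ ^ 2 * ‖y - w‖ ^ 2 := by positivity
    have h3 : (5 * M) ^ (-a) ≤ (1 + μ ^ 2 * ‖y - w‖ ^ 2) ^ (-a) :=
      Real.rpow_le_rpow_of_nonpos hTpos hT (neg_nonpos.mpr ha)
    have h4 : μ ^ a * (5 * M) ^ (-a) = (5:ℝ) ^ (-a) * mQ μ w ^ a := by
      rw [mQ, ← hMdef, Real.div_rpow hμ.le hM0.le,
        Real.rpow_neg (by positivity : (0:ℝ) ≤ 5 * M),
        Real.mul_rpow (by norm_num : (0:ℝ) ≤ 5) hM0.le,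
        Real.rpow_neg (by norm_num : (0:ℝ) ≤ 5)]
      have h5a : (0:ℝ) < (5:ℝ) ^ a := Real.rpow_pos_of_pos (by norm_num) a
      have hMa : (0:ℝ) < M ^ a := Real.rpow_pos_of_pos hM0 a
      field_simp
    calc (2:ℝ) ^ (-b) * ((5:ℝ) ^ (-a) * mQ μ w ^ a)
        = (2:ℝ) ^ (-b) * (μ ^ a * (5 * M) ^ (-a)) := by rw [h4]
      _ ≤ base N y * (μ ^ a * (1 + μ ^ 2 * ‖y - w‖ ^ 2) ^ (-a)) := by
          apply mul_le_mul hbase _ (by positivity) (base_pos y).le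
          exact mul_le_mul_of_nonneg_left h3 (Real.rpow_nonneg hμ.le a)
      _ = corefn N μ w y := rfl
  -- integrate
  have hvol : volume (Metric.ball (0 : E N) 1) ≠ ⊤ := measure_ball_lt_top.ne
  have hint := corefn_integrable hN hμ hμ1 w
  have h6 := setIntegral_ge_of_const_le (μ := (volume : Measure (E N)))
    measurableSet_ball hvol key hint.integrableOn
  have h7 : ∫ y in Metric.ball (0 : E N) 1, corefn N μ w y ≤ ∫ y, corefn N μ w y :=
    setIntegral_le_integral hint
      (Filter.Eventually.of_forall fun y => corefn_nonneg μ w y hμ.le)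
  calc (2:ℝ) ^ (-b) * (5:ℝ) ^ (-a) * (volume (Metric.ball (0 : E N) 1)).toReal * mQ μ w ^ a
      = (2:ℝ) ^ (-b) * ((5:ℝ) ^ (-a) * mQ μ w ^ a)
        * (volume (Metric.ball (0 : E N) 1)).toReal := by ring
    _ ≤ ∫ y in Metric.ball (0 : E N) 1, corefn N μ w y := by rw [mul_comm]; exact h6
    _ ≤ ∫ y, corefn N μ w y := h7


lemma arith_u {u : ℝ} (hu : 0 < u) {N : ℕ} :
    u ^ (((N:ℝ)-2)/2) * u ^ 4 * (u ^ N)⁻¹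
      = u ^ 2 * u ^ (((N:ℝ)-2)/2) * ((u ^ 2) ^ (((N:ℝ)-2)/2))⁻¹ := by
  simp only [← Real.rpow_natCast u, ← Real.rpow_mul hu.le, ← Real.rpow_neg hu.le,
    ← Real.rpow_add hu]
  congr 1
  push_cast
  ring

lemma arith_v {v : ℝ} (hv : 0 < v) {N : ℕ} :
    (v ^ 2) ^ (-(((N:ℝ)+2)/2)) * v ^ 4 = ((v ^ 2) ^ (((N:ℝ)-2)/2))⁻¹ := by
  simp only [← Real.rpow_natCast v, ← Real.rpow_mul hv.le, ← Real.rpow_neg hv.le,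
    ← Real.rpow_add hv]
  congr 1
  push_cast
  ring

lemma arith_eq (N : ℕ) {u v : ℝ} (hu : 0 < u) (hv : 0 < v) :
    (v ^ 2 / 4) ^ (-(((N:ℝ)+2)/2)) * (u ^ (((N:ℝ)-2)/2) * ((5/4) * (u ^ 2 * v ^ 2)) ^ 2)
        * (u ^ N)⁻¹
      = (25/16) * 4 ^ (((N:ℝ)+2)/2) * u ^ 2
        * (u / (u ^ 2 * v ^ 2)) ^ (((N:ℝ)-2)/2) := by
  have h4b : (0:ℝ) < (4:ℝ) ^ (((N:ℝ)+2)/2) := Real.rpow_pos_of_pos (by norm_num) _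
  have h1 : (v ^ 2 / 4 : ℝ) ^ (-(((N:ℝ)+2)/2))
      = (v ^ 2) ^ (-(((N:ℝ)+2)/2)) * 4 ^ (((N:ℝ)+2)/2) := by
    rw [Real.div_rpow (sq_nonneg v) (by norm_num : (0:ℝ) ≤ 4),
      Real.rpow_neg (by norm_num : (0:ℝ) ≤ 4), div_inv_eq_mul]
  have h2 : (u / (u ^ 2 * v ^ 2)) ^ (((N:ℝ)-2)/2)
      = u ^ (((N:ℝ)-2)/2) * ((u ^ 2) ^ (((N:ℝ)-2)/2))⁻¹ * ((v ^ 2) ^ (((N:ℝ)-2)/2))⁻¹ := by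
    rw [Real.div_rpow hu.le (by positivity),
      Real.mul_rpow (sq_nonneg u) (sq_nonneg v), div_eq_mul_inv, mul_inv]
    ring
  calc (v ^ 2 / 4) ^ (-(((N:ℝ)+2)/2)) * (u ^ (((N:ℝ)-2)/2) * ((5/4) * (u ^ 2 * v ^ 2)) ^ 2)
        * (u ^ N)⁻¹
      = (25/16) * 4 ^ (((N:ℝ)+2)/2) * ((v ^ 2) ^ (-(((N:ℝ)+2)/2)) * v ^ 4)
        * (u ^ (((N:ℝ)-2)/2) * u ^ 4 * (u ^ N)⁻¹) := by rw [h1]; ring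
    _ = (25/16) * 4 ^ (((N:ℝ)+2)/2) * ((v ^ 2) ^ (((N:ℝ)-2)/2))⁻¹
        * (u ^ 2 * u ^ (((N:ℝ)-2)/2) * ((u ^ 2) ^ (((N:ℝ)-2)/2))⁻¹) := by
          rw [arith_v hv, arith_u hu]
    _ = (25/16) * 4 ^ (((N:ℝ)+2)/2) * u ^ 2
        * (u / (u ^ 2 * v ^ 2)) ^ (((N:ℝ)-2)/2) := by rw [h2]; ring


lemma core_upper (hN : 3 ≤ N) {μ : ℝ} (hμ : 0 < μ) (hμ1 : μ ≤ 1) (w : E N) :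
    ∫ y : E N, corefn N μ w y
      ≤ ((1:ℝ) + 4 ^ (((N:ℝ)-2)/2) + (25/16) * 4 ^ (((N:ℝ)+2)/2)) * Iconst N
        * mQ μ w ^ (((N:ℝ)-2)/2) := by
  have ha : (0:ℝ) ≤ ((N:ℝ)-2)/2 := by
    have : (3:ℝ) ≤ (N:ℝ) := by exact_mod_cast hN
    linarith
  set a : ℝ := ((N:ℝ)-2)/2 with hadef
  set b : ℝ := ((N:ℝ)+2)/2 with hbdef
  have hI : (0:ℝ) < Iconst N := Iconst_pos hN
  have hmQ0 : (0:ℝ) < mQ μ w := mQ_pos hμ w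
  have hmQa : (0:ℝ) ≤ mQ μ w ^ a := Real.rpow_nonneg hmQ0.le a
  have h4a : (0:ℝ) < (4:ℝ) ^ a := Real.rpow_pos_of_pos (by norm_num) a
  have h4b : (0:ℝ) < (4:ℝ) ^ b := Real.rpow_pos_of_pos (by norm_num) b
  by_cases hcase : μ ^ 2 * ‖w‖ ^ 2 ≤ 1
  · -- Q = μ
    have hM : max 1 (μ ^ 2 * ‖w‖ ^ 2) = 1 := max_eq_left hcase
    have hmQ : mQ μ w = μ := by rw [mQ, hM, div_one]
    have hpt : ∀ y : E N, corefn N μ w y ≤ base N y * μ ^ a := by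
      intro y
      have hT : (1:ℝ) ≤ 1 + μ ^ 2 * ‖y - w‖ ^ 2 :=
        le_add_of_nonneg_right (by positivity)
      have h2 : (1 + μ ^ 2 * ‖y - w‖ ^ 2) ^ (-a) ≤ 1 :=
        Real.rpow_le_one_of_one_le_of_nonpos hT (neg_nonpos.mpr ha)
      calc corefn N μ w y
          = base N y * (μ ^ a * (1 + μ ^ 2 * ‖y - w‖ ^ 2) ^ (-a)) := rfl
        _ ≤ base N y * (μ ^ a * 1) := by
            apply mul_le_mul_of_nonneg_left _ (base_pos y).le
            exact mul_le_mul_of_nonneg_left h2 (Real.rpow_nonneg hμ.le a)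
        _ = base N y * μ ^ a := by ring
    have hint2 : Integrable (fun y : E N => base N y * μ ^ a) :=
      (base_integrable hN).mul_const _
    have h3 : ∫ y : E N, corefn N μ w y ≤ ∫ y : E N, base N y * μ ^ a :=
      integral_mono (corefn_integrable hN hμ hμ1 w) hint2 hpt
    rw [integral_mul_const] at h3
    rw [hmQ]
    calc ∫ y : E N, corefn N μ w y ≤ Iconst N * μ ^ a := h3
      _ ≤ ((1:ℝ) + 4 ^ a + (25/16) * 4 ^ b) * Iconst N * μ ^ a := by
          have hμa : (0:ℝ) ≤ μ ^ a := Real.rpow_nonneg hμ.le a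
          nlinarith [mul_nonneg hI.le hμa, mul_nonneg (mul_nonneg h4a.le hI.le) hμa,
            mul_nonneg (mul_nonneg h4b.le hI.le) hμa]
  · push_neg at hcase
    have hμ2 : μ ^ 2 ≤ 1 := by nlinarith
    have hw2 : (1:ℝ) < ‖w‖ ^ 2 := by nlinarith [sq_nonneg ‖w‖]
    have hw : (0:ℝ) < ‖w‖ := by nlinarith [norm_nonneg w]
    have hM : max 1 (μ ^ 2 * ‖w‖ ^ 2) = μ ^ 2 * ‖w‖ ^ 2 := max_eq_right hcase.le
    have hmQ : mQ μ w = μ / (μ ^ 2 * ‖w‖ ^ 2) := by rw [mQ, hM]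
    have hMw : (0:ℝ) < μ ^ 2 * ‖w‖ ^ 2 := by positivity
    set S : Set (E N) := Metric.ball w (‖w‖/2) with hSdef
    have hint := corefn_integrable hN hμ hμ1 w
    have hsplit : ∫ y : E N, corefn N μ w y
        = (∫ y in S, corefn N μ w y) + ∫ y in Sᶜ, corefn N μ w y :=
      (integral_add_compl measurableSet_ball hint).symm
    -- bound on the complement
    have hec : μ ^ a * (μ ^ 2 * ‖w‖ ^ 2 / 4) ^ (-a) = 4 ^ a * mQ μ w ^ a := by
      rw [hmQ, Real.div_rpow hμ.le hMw.le,
        Real.rpow_neg (by positivity : (0:ℝ) ≤ μ ^ 2 * ‖w‖ ^ 2 / 4),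
        Real.div_rpow hMw.le (by norm_num : (0:ℝ) ≤ 4)]
      have hMa : (0:ℝ) < (μ ^ 2 * ‖w‖ ^ 2) ^ a := Real.rpow_pos_of_pos hMw a
      field_simp
    have hptc : ∀ y ∈ Sᶜ, corefn N μ w y ≤ base N y * (4 ^ a * mQ μ w ^ a) := by
      intro y hy
      have hd : ‖w‖/2 ≤ ‖y - w‖ := by
        have := Metric.mem_ball.not.mp hy
        push_neg at this
        rwa [dist_eq_norm] at this
      have hT : μ ^ 2 * ‖w‖ ^ 2 / 4 ≤ 1 + μ ^ 2 * ‖y - w‖ ^ 2 := by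
        have h1 : (‖w‖/2) ^ 2 ≤ ‖y - w‖ ^ 2 := by
          apply pow_le_pow_left₀ (by positivity) hd
        nlinarith [sq_nonneg μ, mul_le_mul_of_nonneg_left h1 (sq_nonneg μ)]
      have h3 : (1 + μ ^ 2 * ‖y - w‖ ^ 2) ^ (-a) ≤ (μ ^ 2 * ‖w‖ ^ 2 / 4) ^ (-a) :=
        Real.rpow_le_rpow_of_nonpos (by positivity) hT (neg_nonpos.mpr ha)
      calc corefn N μ w y
          = base N y * (μ ^ a * (1 + μ ^ 2 * ‖y - w‖ ^ 2) ^ (-a)) := rfl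
        _ ≤ base N y * (μ ^ a * (μ ^ 2 * ‖w‖ ^ 2 / 4) ^ (-a)) := by
            apply mul_le_mul_of_nonneg_left _ (base_pos y).le
            exact mul_le_mul_of_nonneg_left h3 (Real.rpow_nonneg hμ.le a)
        _ = base N y * (4 ^ a * mQ μ w ^ a) := by rw [← hec]
    have hIc : ∫ y in Sᶜ, corefn N μ w y ≤ 4 ^ a * Iconst N * mQ μ w ^ a := by
      have h1 : ∫ y in Sᶜ, corefn N μ w y
          ≤ ∫ y in Sᶜ, base N y * (4 ^ a * mQ μ w ^ a) := by
        apply setIntegral_mono_on hint.integrableOn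
          (((base_integrable hN).mul_const _).integrableOn)
          measurableSet_ball.compl hptc
      rw [integral_mul_const] at h1
      have h2 : ∫ y in Sᶜ, base N y ≤ Iconst N :=
        setIntegral_le_integral (base_integrable hN)
          (Filter.Eventually.of_forall fun y => (base_pos y).le)
      calc ∫ y in Sᶜ, corefn N μ w y
          ≤ (∫ y in Sᶜ, base N y) * (4 ^ a * mQ μ w ^ a) := h1
        _ ≤ Iconst N * (4 ^ a * mQ μ w ^ a) := by
            apply mul_le_mul_of_nonneg_right h2 (by positivity)
        _ = 4 ^ a * Iconst N * mQ μ w ^ a := by ring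
    -- bound on the ball
    set D : ℝ := (‖w‖ ^ 2 / 4) ^ (-b) * (μ ^ a * ((5/4) * (μ ^ 2 * ‖w‖ ^ 2)) ^ 2) with hDdef
    have hD0 : (0:ℝ) ≤ D := by
      have := Real.rpow_pos_of_pos (show (0:ℝ) < ‖w‖ ^ 2 / 4 by positivity) (-b)
      have := Real.rpow_nonneg hμ.le a
      positivity
    have hpts : ∀ y ∈ S, corefn N μ w y ≤ D * (1 + μ ^ 2 * ‖y - w‖ ^ 2) ^ (-b) := by
      intro y hy
      rw [hSdef, Metric.mem_ball, dist_eq_norm] at hy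
      have hyn : ‖w‖/2 ≤ ‖y‖ := by
        have h1 := norm_sub_norm_le w y
        have h2 : ‖w - y‖ = ‖y - w‖ := norm_sub_rev w y
        linarith
      have hbase : base N y ≤ (‖w‖ ^ 2 / 4) ^ (-b) := by
        rw [base]
        apply Real.rpow_le_rpow_of_nonpos (by positivity)
          (by nlinarith [norm_nonneg y]) (neg_nonpos.mpr (by positivity))
      have hTpos : (0:ℝ) < 1 + μ ^ 2 * ‖y - w‖ ^ 2 := by positivity
      have hTsplit : (1 + μ ^ 2 * ‖y - w‖ ^ 2) ^ (-a)
          = (1 + μ ^ 2 * ‖y - w‖ ^ 2) ^ 2 * (1 + μ ^ 2 * ‖y - w‖ ^ 2) ^ (-b) := by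
        rw [show (-a) = (2:ℝ) + (-b) by rw [hadef, hbdef]; ring,
          Real.rpow_add hTpos, Real.rpow_two]
      have hT2 : (1 + μ ^ 2 * ‖y - w‖ ^ 2) ^ 2 ≤ ((5/4) * (μ ^ 2 * ‖w‖ ^ 2)) ^ 2 := by
        apply pow_le_pow_left₀ hTpos.le
        have h1 : ‖y - w‖ ^ 2 ≤ (‖w‖/2) ^ 2 :=
          pow_le_pow_left₀ (norm_nonneg _) hy.le 2
        nlinarith [sq_nonneg μ, mul_le_mul_of_nonneg_left h1 (sq_nonneg μ)]
      have hbnn : (0:ℝ) ≤ (1 + μ ^ 2 * ‖y - w‖ ^ 2) ^ (-b) :=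
        (Real.rpow_pos_of_pos hTpos _).le
      calc corefn N μ w y
          = base N y * μ ^ a * (1 + μ ^ 2 * ‖y - w‖ ^ 2) ^ 2
            * (1 + μ ^ 2 * ‖y - w‖ ^ 2) ^ (-b) := by
            rw [corefn, hTsplit]; ring
        _ ≤ (‖w‖ ^ 2 / 4) ^ (-b) * μ ^ a * ((5/4) * (μ ^ 2 * ‖w‖ ^ 2)) ^ 2
            * (1 + μ ^ 2 * ‖y - w‖ ^ 2) ^ (-b) := by
            apply mul_le_mul_of_nonneg_right _ hbnn
            apply mul_le_mul _ hT2 (by positivity) (by positivity)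
            exact mul_le_mul_of_nonneg_right hbase (Real.rpow_nonneg hμ.le a)
        _ = D * (1 + μ ^ 2 * ‖y - w‖ ^ 2) ^ (-b) := by rw [hDdef]; ring
    have hIb : ∫ y in S, corefn N μ w y ≤ (25/16) * 4 ^ b * Iconst N * mQ μ w ^ a := by
      have h1 : ∫ y in S, corefn N μ w y
          ≤ ∫ y in S, D * (1 + μ ^ 2 * ‖y - w‖ ^ 2) ^ (-b) := by
        apply setIntegral_mono_on hint.integrableOn
          (((integrable_base_shift hN hμ w).const_mul D).integrableOn)
          measurableSet_ball hpts
      rw [integral_const_mul] at h1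
      have h2 : ∫ y in S, (1 + μ ^ 2 * ‖y - w‖ ^ 2) ^ (-b)
          ≤ ∫ y : E N, (1 + μ ^ 2 * ‖y - w‖ ^ 2) ^ (-b) :=
        setIntegral_le_integral (integrable_base_shift hN hμ w)
          (Filter.Eventually.of_forall fun y =>
            (Real.rpow_pos_of_pos (by positivity) _).le)
      have h3 := integral_base_shift hN hμ w
      have key : D * ((μ ^ N)⁻¹ * Iconst N)
          ≤ (25/16) * 4 ^ b * Iconst N * mQ μ w ^ a := by
        have he := arith_eq N hμ hw
        rw [hDdef, hmQ]
        calc (‖w‖ ^ 2 / 4) ^ (-b) * (μ ^ a * ((5/4) * (μ ^ 2 * ‖w‖ ^ 2)) ^ 2)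
              * ((μ ^ N)⁻¹ * Iconst N)
            = ((‖w‖ ^ 2 / 4) ^ (-b) * (μ ^ a * ((5/4) * (μ ^ 2 * ‖w‖ ^ 2)) ^ 2)
              * (μ ^ N)⁻¹) * Iconst N := by ring
          _ = ((25/16) * 4 ^ b * μ ^ 2 * (μ / (μ ^ 2 * ‖w‖ ^ 2)) ^ a) * Iconst N := by
              rw [he]
          _ ≤ (25/16) * 4 ^ b * Iconst N * (μ / (μ ^ 2 * ‖w‖ ^ 2)) ^ a := by
              have hq : (0:ℝ) ≤ (μ / (μ ^ 2 * ‖w‖ ^ 2)) ^ a :=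
                Real.rpow_nonneg (by positivity) a
              nlinarith [mul_nonneg (mul_nonneg h4b.le hI.le) hq]
      calc ∫ y in S, corefn N μ w y
          ≤ D * ∫ y in S, (1 + μ ^ 2 * ‖y - w‖ ^ 2) ^ (-b) := h1
        _ ≤ D * ∫ y : E N, (1 + μ ^ 2 * ‖y - w‖ ^ 2) ^ (-b) :=
            mul_le_mul_of_nonneg_left h2 hD0
        _ = D * ((μ ^ N)⁻¹ * Iconst N) := by rw [h3]
        _ ≤ (25/16) * 4 ^ b * Iconst N * mQ μ w ^ a := key
    rw [hsplit]
    have : (0:ℝ) ≤ Iconst N * mQ μ w ^ a := mul_nonneg hI.le hmQa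
    nlinarith [hIb, hIc]


def Acon (N : ℕ) : ℝ := ((N:ℝ) * ((N:ℝ) - 2)) ^ (((N : ℝ) - 2) / 4)

lemma Acon_pos (hN : 3 ≤ N) : 0 < Acon N := by
  have hN3 : (3:ℝ) ≤ (N:ℝ) := by exact_mod_cast hN
  exact Real.rpow_pos_of_pos (by nlinarith) _

lemma bubble_pow (hN : 3 ≤ N) {l : ℝ} (hl : 0 < l) (z x : E N) :
    bubble14 N z l x ^ (((N:ℝ)+2)/((N:ℝ)-2))
      = Acon N ^ (((N:ℝ)+2)/((N:ℝ)-2))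
        * (l ^ (((N:ℝ)+2)/2) * (1 + l ^ 2 * ‖x - z‖ ^ 2) ^ (-(((N:ℝ)+2)/2))) := by
  have hN3 : (3:ℝ) ≤ (N:ℝ) := by exact_mod_cast hN
  have hden : (N:ℝ) - 2 ≠ 0 := by nlinarith
  have hApos := Acon_pos hN
  have hT : (0:ℝ) < 1 + l ^ 2 * ‖x - z‖ ^ 2 := by positivity
  have hexp1 : (((N:ℝ)-2)/2) * (((N:ℝ)+2)/((N:ℝ)-2)) = ((N:ℝ)+2)/2 := by
    field_simp
  have hexp2 : (-(((N:ℝ)-2)/2)) * (((N:ℝ)+2)/((N:ℝ)-2)) = -(((N:ℝ)+2)/2) := by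
    field_simp
  rw [bubble14, ← Acon]
  rw [Real.mul_rpow (by positivity) (Real.rpow_pos_of_pos hT _).le,
    Real.mul_rpow hApos.le (Real.rpow_nonneg hl.le _),
    ← Real.rpow_mul hl.le, ← Real.rpow_mul hT.le, hexp1, hexp2, mul_assoc]

lemma main_integral (hN : 3 ≤ N) (z₁ z₂ : E N) {l₁ l₂ : ℝ} (hl2 : 0 < l₂)
    (hle : l₂ ≤ l₁) :
    ∫ x : E N, bubble14 N z₁ l₁ x ^ (((N:ℝ)+2)/((N:ℝ)-2)) * bubble14 N z₂ l₂ x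
      = Acon N ^ (((N:ℝ)+2)/((N:ℝ)-2) + 1)
        * ∫ y : E N, corefn N (l₂/l₁) (l₁ • (z₂ - z₁)) y := by
  have hl1 : (0:ℝ) < l₁ := lt_of_lt_of_le hl2 hle
  have hμ : (0:ℝ) < l₂/l₁ := div_pos hl2 hl1
  have hApos := Acon_pos hN
  have hpt : ∀ y : E N,
      bubble14 N z₁ l₁ (z₁ + l₁⁻¹ • y) ^ (((N:ℝ)+2)/((N:ℝ)-2))
          * bubble14 N z₂ l₂ (z₁ + l₁⁻¹ • y)
        = Acon N ^ (((N:ℝ)+2)/((N:ℝ)-2) + 1)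
          * (l₁ ^ (((N:ℝ)+2)/2) * l₁ ^ (((N:ℝ)-2)/2))
          * corefn N (l₂/l₁) (l₁ • (z₂ - z₁)) y := by
    intro y
    have e1 : l₁ ^ 2 * ‖(z₁ + l₁⁻¹ • y) - z₁‖ ^ 2 = ‖y‖ ^ 2 := by
      rw [add_sub_cancel_left, norm_smul, Real.norm_eq_abs, abs_of_pos (inv_pos.mpr hl1)]
      field_simp
    have e2 : (z₁ + l₁⁻¹ • y) - z₂ = l₁⁻¹ • (y - l₁ • (z₂ - z₁)) := by
      rw [smul_sub, smul_smul, inv_mul_cancel₀ hl1.ne', one_smul]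
      abel
    have e3 : l₂ ^ 2 * ‖(z₁ + l₁⁻¹ • y) - z₂‖ ^ 2
        = (l₂/l₁) ^ 2 * ‖y - l₁ • (z₂ - z₁)‖ ^ 2 := by
      rw [e2, norm_smul, Real.norm_eq_abs, abs_of_pos (inv_pos.mpr hl1)]
      field_simp
    have hl2a : l₂ ^ (((N:ℝ)-2)/2)
        = l₁ ^ (((N:ℝ)-2)/2) * (l₂/l₁) ^ (((N:ℝ)-2)/2) := by
      have h : l₂ = l₁ * (l₂/l₁) := by field_simp
      rw [show (l₂:ℝ) ^ (((N:ℝ)-2)/2) = (l₁ * (l₂/l₁)) ^ (((N:ℝ)-2)/2) by rw [← h],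
        Real.mul_rpow hl1.le hμ.le]
    rw [bubble_pow hN hl1, e1, bubble14, ← Acon, e3, hl2a, corefn, base,
      Real.rpow_add_one hApos.ne']
    ring
  have hs1 : ∫ x : E N, bubble14 N z₁ l₁ x ^ (((N:ℝ)+2)/((N:ℝ)-2)) * bubble14 N z₂ l₂ x
      = ∫ y : E N, bubble14 N z₁ l₁ (z₁ + y) ^ (((N:ℝ)+2)/((N:ℝ)-2))
          * bubble14 N z₂ l₂ (z₁ + y) :=
    (integral_add_left_eq_self
      (fun x : E N => bubble14 N z₁ l₁ x ^ (((N:ℝ)+2)/((N:ℝ)-2)) * bubble14 N z₂ l₂ x) z₁).symm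
  have hs2 := Measure.integral_comp_inv_smul (volume : Measure (E N))
    (fun y : E N => bubble14 N z₁ l₁ (z₁ + y) ^ (((N:ℝ)+2)/((N:ℝ)-2))
      * bubble14 N z₂ l₂ (z₁ + y)) l₁
  rw [finrank_euclideanSpace_fin, abs_of_pos (pow_pos hl1 N), smul_eq_mul] at hs2
  have hs3 : ∫ y : E N, bubble14 N z₁ l₁ (z₁ + l₁⁻¹ • y) ^ (((N:ℝ)+2)/((N:ℝ)-2))
      * bubble14 N z₂ l₂ (z₁ + l₁⁻¹ • y)
      = Acon N ^ (((N:ℝ)+2)/((N:ℝ)-2) + 1)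
        * (l₁ ^ (((N:ℝ)+2)/2) * l₁ ^ (((N:ℝ)-2)/2))
        * ∫ y : E N, corefn N (l₂/l₁) (l₁ • (z₂ - z₁)) y := by
    simp_rw [hpt]
    rw [integral_const_mul]
  have hbl : l₁ ^ (((N:ℝ)+2)/2) * l₁ ^ (((N:ℝ)-2)/2) = l₁ ^ N := by
    rw [← Real.rpow_natCast l₁ N, ← Real.rpow_add hl1]
    congr 1
    push_cast
    ring
  have hval : Acon N ^ (((N:ℝ)+2)/((N:ℝ)-2) + 1) * (l₁ ^ N : ℝ)
      * (∫ y : E N, corefn N (l₂/l₁) (l₁ • (z₂ - z₁)) y)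
      = (l₁ ^ N : ℝ) * ∫ y : E N, bubble14 N z₁ l₁ (z₁ + y) ^ (((N:ℝ)+2)/((N:ℝ)-2))
          * bubble14 N z₂ l₂ (z₁ + y) := by
    rw [← hs2, hs3, hbl]
  have hpow : (0:ℝ) < l₁ ^ N := pow_pos hl1 N
  rw [hs1]
  have h2 : (l₁ ^ N : ℝ) * (Acon N ^ (((N:ℝ)+2)/((N:ℝ)-2) + 1)
      * ∫ y : E N, corefn N (l₂/l₁) (l₁ • (z₂ - z₁)) y)
      = (l₁ ^ N : ℝ) * ∫ y : E N, bubble14 N z₁ l₁ (z₁ + y) ^ (((N:ℝ)+2)/((N:ℝ)-2))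
          * bubble14 N z₂ l₂ (z₁ + y) := by
    rw [← hval]; ring
  exact (mul_left_cancel₀ hpow.ne' h2).symm

lemma div_max_eq {c x : ℝ} (hc : 0 < c) (hx : 0 < x) :
    c / max 1 x = min c (c / x) := by
  rcases le_total 1 x with h | h
  · rw [max_eq_right h, min_eq_right]
    exact div_le_self hc.le h
  · rw [max_eq_left h, div_one, min_eq_left]
    rw [le_div_iff₀ hx]
    nlinarith

lemma interQ_eq (z₁ z₂ : E N) {l₁ l₂ : ℝ} (hl2 : 0 < l₂) (hle : l₂ ≤ l₁) :
    interQ14 N z₁ z₂ l₁ l₂ = mQ (l₂/l₁) (l₁ • (z₂ - z₁)) := by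
  have hl1 : (0:ℝ) < l₁ := lt_of_lt_of_le hl2 hle
  have hμ : (0:ℝ) < l₂/l₁ := div_pos hl2 hl1
  by_cases h : z₁ = z₂
  · rw [interQ14, if_pos h, mQ, h, sub_self, smul_zero, norm_zero]
    norm_num
  · rw [interQ14, if_neg h, mQ]
    have hz : (0:ℝ) < ‖z₂ - z₁‖ := by
      rw [norm_pos_iff, sub_ne_zero]
      exact fun hh => h hh.symm
    have hw : ‖l₁ • (z₂ - z₁)‖ ^ 2 = l₁ ^ 2 * ‖z₂ - z₁‖ ^ 2 := by
      rw [norm_smul, Real.norm_eq_abs, mul_pow, sq_abs]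
    have hx : (0:ℝ) < (l₂/l₁) ^ 2 * ‖l₁ • (z₂ - z₁)‖ ^ 2 := by
      rw [hw]; positivity
    rw [div_max_eq hμ hx]
    congr 1
    rw [hw, norm_sub_rev z₁ z₂]
    field_simp

end S14
end

/-- For two bubbles `U = U[z₁,λ₁]`, `V = U[z₂,λ₂]` with `λ₁ ≥ λ₂`, the interaction integral
`∫ U^p V` with `p = (N+2)/(N-2)` is comparable to `Q^{(N-2)/2}`, with constants depending
only on `N`. -/
theorem stmt_14 (N : ℕ) (hN : 3 ≤ N) :
    ∃ c C : ℝ, 0 < c ∧ 0 < C ∧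
      ∀ (z₁ z₂ : EuclideanSpace ℝ (Fin N)) (l₁ l₂ : ℝ), 0 < l₂ → l₂ ≤ l₁ →
        c * interQ14 N z₁ z₂ l₁ l₂ ^ (((N : ℝ) - 2) / 2)
            ≤ (∫ x : EuclideanSpace ℝ (Fin N),
                bubble14 N z₁ l₁ x ^ (((N : ℝ) + 2) / ((N : ℝ) - 2)) * bubble14 N z₂ l₂ x) ∧
          (∫ x : EuclideanSpace ℝ (Fin N),
              bubble14 N z₁ l₁ x ^ (((N : ℝ) + 2) / ((N : ℝ) - 2)) * bubble14 N z₂ l₂ x)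
            ≤ C * interQ14 N z₁ z₂ l₁ l₂ ^ (((N : ℝ) - 2) / 2) := by
  classical
  have hApow : (0:ℝ) < S14.Acon N ^ (((N:ℝ)+2)/((N:ℝ)-2) + 1) :=
    Real.rpow_pos_of_pos (S14.Acon_pos hN) _
  set clow : ℝ := (2:ℝ) ^ (-(((N:ℝ)+2)/2)) * (5:ℝ) ^ (-(((N:ℝ)-2)/2))
    * (volume (Metric.ball (0 : S14.E N) 1)).toReal with hclowdef
  set Cup : ℝ := ((1:ℝ) + 4 ^ (((N:ℝ)-2)/2) + (25/16) * 4 ^ (((N:ℝ)+2)/2)) * S14.Iconst N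
    with hCupdef
  have hvol : (0:ℝ) < (volume (Metric.ball (0 : S14.E N) 1)).toReal := by
    refine ENNReal.toReal_pos (Metric.measure_ball_pos volume 0 one_pos).ne'
      measure_ball_lt_top.ne
  have hclow : 0 < clow := by
    have h2 := Real.rpow_pos_of_pos (show (0:ℝ) < 2 by norm_num) (-(((N:ℝ)+2)/2))
    have h5 := Real.rpow_pos_of_pos (show (0:ℝ) < 5 by norm_num) (-(((N:ℝ)-2)/2))
    positivity
  have hCup : 0 < Cup := by
    have h4a := Real.rpow_pos_of_pos (show (0:ℝ) < 4 by norm_num) (((N:ℝ)-2)/2)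
    have h4b := Real.rpow_pos_of_pos (show (0:ℝ) < 4 by norm_num) (((N:ℝ)+2)/2)
    have hI := S14.Iconst_pos hN
    positivity
  refine ⟨S14.Acon N ^ (((N:ℝ)+2)/((N:ℝ)-2) + 1) * clow,
    S14.Acon N ^ (((N:ℝ)+2)/((N:ℝ)-2) + 1) * Cup,
    mul_pos hApow hclow, mul_pos hApow hCup, ?_⟩
  intro z₁ z₂ l₁ l₂ hl2 hle
  have hl1 : (0:ℝ) < l₁ := lt_of_lt_of_le hl2 hle
  have hμ : (0:ℝ) < l₂/l₁ := div_pos hl2 hl1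
  have hμ1 : l₂/l₁ ≤ 1 := (div_le_one hl1).mpr hle
  rw [S14.main_integral hN z₁ z₂ hl2 hle, S14.interQ_eq z₁ z₂ hl2 hle]
  have hlow := S14.core_lower hN hμ hμ1 (l₁ • (z₂ - z₁))
  have hup := S14.core_upper hN hμ hμ1 (l₁ • (z₂ - z₁))
  constructor
  · calc S14.Acon N ^ (((N:ℝ)+2)/((N:ℝ)-2) + 1) * clow
          * S14.mQ (l₂/l₁) (l₁ • (z₂ - z₁)) ^ (((N:ℝ)-2)/2)
        = S14.Acon N ^ (((N:ℝ)+2)/((N:ℝ)-2) + 1)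
          * (clow * S14.mQ (l₂/l₁) (l₁ • (z₂ - z₁)) ^ (((N:ℝ)-2)/2)) := by ring
      _ ≤ S14.Acon N ^ (((N:ℝ)+2)/((N:ℝ)-2) + 1)
          * ∫ y : S14.E N, S14.corefn N (l₂/l₁) (l₁ • (z₂ - z₁)) y := by
          apply mul_le_mul_of_nonneg_left _ hApow.le
          rw [hclowdef]
          exact hlow
  · calc S14.Acon N ^ (((N:ℝ)+2)/((N:ℝ)-2) + 1)
          * ∫ y : S14.E N, S14.corefn N (l₂/l₁) (l₁ • (z₂ - z₁)) y
        ≤ S14.Acon N ^ (((N:ℝ)+2)/((N:ℝ)-2) + 1)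
          * (Cup * S14.mQ (l₂/l₁) (l₁ • (z₂ - z₁)) ^ (((N:ℝ)-2)/2)) := by
          apply mul_le_mul_of_nonneg_left _ hApow.le
          rw [hCupdef]
          exact hup
      _ = S14.Acon N ^ (((N:ℝ)+2)/((N:ℝ)-2) + 1) * Cup
          * S14.mQ (l₂/l₁) (l₁ • (z₂ - z₁)) ^ (((N:ℝ)-2)/2) := by ring
end
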